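/- Let μ_a and μ_{a*} be mutually absolutely continuous probability measures on X with finite KL divergences. Then the minimum of KL(ν, μ_{a*}) over all probability measures ν satisfying ∫ log(dμ_{a*}/dμ_a) dν ≤ −KL(μ_a, μ_{a*}) is attained at ν = μ_a and equals KL(μ_a, μ_{a*}). -/

import Mathlib

open MeasureTheory
open scoped Classical

/-- Kullback–Leibler divergence: `∫ log (dν/dμ) dν` when `ν ≪ μ` and the integral is
well-defined, and `+∞` otherwise. -/
noncomputable def KL {X : Type*} [MeasurableSpace X] (ν μ : Measure X) : ENNReal :=
  if ν ≪ μ ∧ Integrable (fun x => Real.log ((ν.rnDeriv μ x).toReal)) ν then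
    ENNReal.ofReal (∫ x, Real.log ((ν.rnDeriv μ x).toReal) ∂ν)
  else ⊤

/-!
For probability measures `KL` agrees with `klDiv`, so `(KL ν μ).toReal = ∫ llr ν μ ∂ν`.
Since `log (dμas/dμa) = -llr μa μas` holds `μa`-a.e., the constraint is tight at `ν = μa`.
For a feasible `ν ≪ μa`, the chain rule `llr ν μas = llr ν μa + llr μa μas` and Gibbs'
inequality `0 ≤ ∫ llr ν μa ∂ν` give
`KL(ν, μas) ≥ ∫ llr μa μas ∂ν = -∫ log (dμas/dμa) ∂ν ≥ KL(μa, μas)`.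
-/

open InformationTheory

section

variable {X : Type*} [MeasurableSpace X]

lemma KL_eq_klDiv (ν μ : Measure X) [IsProbabilityMeasure ν] [IsProbabilityMeasure μ] :
    KL ν μ = klDiv ν μ := by
  rw [KL, ← llr_def]
  by_cases h : ν ≪ μ ∧ Integrable (llr ν μ) ν
  · rw [if_pos h, klDiv_of_ac_of_integrable h.1 h.2]
    simp
  · rw [if_neg h, eq_comm, klDiv_eq_top_iff]
    exact fun hνμ hint => h ⟨hνμ, hint⟩

lemma toReal_KL_eq_integral_llr {ν μ : Measure X} [IsProbabilityMeasure ν]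
    [IsProbabilityMeasure μ] (h : ν ≪ μ) :
    (KL ν μ).toReal = ∫ x, llr ν μ x ∂ν := by
  rw [KL_eq_klDiv, toReal_klDiv_of_measure_eq h (by simp)]

lemma integral_llr_nonneg {ν μ : Measure X} [IsProbabilityMeasure ν] [IsProbabilityMeasure μ]
    (h : ν ≪ μ) : 0 ≤ ∫ x, llr ν μ x ∂ν := by
  rw [← toReal_KL_eq_integral_llr h]
  exact ENNReal.toReal_nonneg

lemma llr_ae_eq_llr_add_llr {ν μ ρ : Measure X}
    [SigmaFinite ν] [SigmaFinite μ] [SigmaFinite ρ] (hνμ : ν ≪ μ) (hμρ : μ ≪ ρ) :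
    llr ν ρ =ᵐ[ν] llr ν μ + llr μ ρ := by
  filter_upwards [(hνμ.trans hμρ).ae_le (Measure.rnDeriv_mul_rnDeriv hνμ),
    Measure.rnDeriv_pos hνμ, hνμ.ae_le (Measure.rnDeriv_lt_top ν μ),
    hνμ.ae_le (Measure.rnDeriv_pos hμρ),
    (hνμ.trans hμρ).ae_le (Measure.rnDeriv_lt_top μ ρ)]
    with x hmul hνμ_pos hνμ_lt hμρ_pos hμρ_lt
  rw [Pi.add_apply, llr, llr, llr, ← hmul, Pi.mul_apply, ENNReal.toReal_mul,
    Real.log_mul (ENNReal.toReal_pos hνμ_pos.ne' hνμ_lt.ne).ne'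
      (ENNReal.toReal_pos hμρ_pos.ne' hμρ_lt.ne).ne']

end

theorem stmt1_general {X : Type*} [MeasurableSpace X]
    (μa μas : Measure X) [IsProbabilityMeasure μa] [IsProbabilityMeasure μas]
    (h1 : μa ≪ μas)
    (hfin1 : KL μa μas ≠ ⊤) :
    (∫ x, Real.log ((μas.rnDeriv μa x).toReal) ∂μa = -(KL μa μas).toReal) ∧
      ∀ ν : Measure X, IsProbabilityMeasure ν → ν ≪ μa → ν ≪ μas →
        Integrable (fun x => Real.log ((μas.rnDeriv μa x).toReal)) ν →
        (∫ x, Real.log ((μas.rnDeriv μa x).toReal) ∂ν) ≤ -(KL μa μas).toReal →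
        KL μa μas ≤ KL ν μas := by
  have hneg : llr μas μa =ᵐ[μa] -llr μa μas := (neg_llr h1).symm
  refine ⟨?_, fun ν _ hνa hνas hint hle => ?_⟩
  · rw [toReal_KL_eq_integral_llr h1, ← integral_neg]
    exact integral_congr_ae hneg
  by_cases htop : KL ν μas = ⊤
  · exact htop ▸ le_top
  obtain ⟨-, hint_νas⟩ := klDiv_ne_top_iff.mp (KL_eq_klDiv ν μas ▸ htop)
  have hneg_ν : llr μa μas =ᵐ[ν] -llr μas μa := by
    filter_upwards [hνa.ae_le hneg] with x hx
    simp [hx]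
  have hchain := llr_ae_eq_llr_add_llr hνa h1
  have hint_aas : Integrable (llr μa μas) ν := hint.neg.congr hneg_ν.symm
  have hint_νa : Integrable (llr ν μa) ν :=
    (hint_νas.sub hint_aas).congr (by filter_upwards [hchain] with x hx; simp [hx])
  rw [← ENNReal.toReal_le_toReal hfin1 htop, toReal_KL_eq_integral_llr hνas]
  calc (KL μa μas).toReal
      ≤ -∫ x, llr μas μa x ∂ν := le_neg_of_le_neg hle
    _ = ∫ x, llr μa μas x ∂ν := by
      rw [← integral_neg]
      exact (integral_congr_ae hneg_ν).symm
    _ ≤ ∫ x, llr ν μa x ∂ν + ∫ x, llr μa μas x ∂ν :=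
      le_add_of_nonneg_left (integral_llr_nonneg hνa)
    _ = ∫ x, llr ν μas x ∂ν := by
      rw [← integral_add hint_νa hint_aas]
      exact (integral_congr_ae hchain).symm

/-- The minimum of `KL(ν, μas)` over probability measures `ν` satisfying
`∫ log (dμas/dμa) dν ≤ −KL(μa, μas)` is attained at `ν = μa` and equals `KL(μa, μas)`. -/
theorem stmt1 {X : Type*} [MeasurableSpace X]
    (μa μas : Measure X) [IsProbabilityMeasure μa] [IsProbabilityMeasure μas]
    (h1 : μa ≪ μas) (h2 : μas ≪ μa)
    (hfin1 : KL μa μas ≠ ⊤) (hfin2 : KL μas μa ≠ ⊤) :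
    (∫ x, Real.log ((μas.rnDeriv μa x).toReal) ∂μa = -(KL μa μas).toReal) ∧
      ∀ ν : Measure X, IsProbabilityMeasure ν → ν ≪ μa → ν ≪ μas →
        Integrable (fun x => Real.log ((μas.rnDeriv μa x).toReal)) ν →
        (∫ x, Real.log ((μas.rnDeriv μa x).toReal) ∂ν) ≤ -(KL μa μas).toReal →
        KL μa μas ≤ KL ν μas :=
  stmt1_general μa μas h1 hfin1
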